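/- For an n×n symmetric 0-1 adjacency matrix W with zero diagonal, degree matrix D = diag(m_1,...,m_n) where m_i = Σ_j w_ij > 0, and design matrix X with i-th row (1, x_i) where x_i ∈ {-1,1}, the determinant of X^T(D-ρW)X equals (1-ρ)(Σ_i m_i)(Σ_i m_i − ρ Σ_i Σ_j w_ij x_i x_j) − (1-ρ)²(Σ_i m_i x_i)². -/
import Mathlib

open Matrix Finset

theorem stmt0 (n : ℕ) (W : Matrix (Fin n) (Fin n) ℝ) (ρ : ℝ)
    (hsym : W.IsSymm) (hdiag : ∀ i, W i i = 0)
    (h01 : ∀ i j, W i j = 0 ∨ W i j = 1)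
    (m : Fin n → ℝ) (hm : ∀ i, m i = ∑ j, W i j) (hmpos : ∀ i, 0 < m i)
    (x : Fin n → ℝ) (hx : ∀ i, x i = 1 ∨ x i = -1)
    (X : Matrix (Fin n) (Fin 2) ℝ) (hX : ∀ i, X i = ![1, x i]) :
    (Xᵀ * (Matrix.diagonal m - ρ • W) * X).det
      = (1 - ρ) * (∑ i, m i) * ((∑ i, m i) - ρ * ∑ i, ∑ j, W i j * x i * x j)
        - (1 - ρ) ^ 2 * (∑ i, m i * x i) ^ 2 := by
  have hX0 : ∀ i, X i 0 = 1 := fun i => by rw [hX]; rfl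
  have hX1 : ∀ i, X i 1 = x i := fun i => by rw [hX]; rfl
  have hx2 : ∀ i, x i * x i = 1 := by
    intro i; rcases hx i with h | h <;> rw [h] <;> ring
  have hWsym : ∀ i j, W j i = W i j := fun i j => congrFun (congrFun hsym i) j
  have hcol : ∀ j, (∑ i, W i j) = m j := by
    intro j; rw [hm]; exact Finset.sum_congr rfl fun i _ => hWsym j i
  have entry : ∀ a b, (Xᵀ * (Matrix.diagonal m - ρ • W) * X) a b
      = (∑ j, X j a * m j * X j b) - ρ * ∑ j, ∑ i, X i a * W i j * X j b := by
    intro a b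
    simp only [Matrix.mul_apply, Matrix.transpose_apply, Matrix.sub_apply,
      Matrix.smul_apply, Matrix.diagonal_apply, smul_eq_mul, mul_sub, sub_mul,
      Finset.sum_sub_distrib, Finset.mul_sum, Finset.sum_mul]
    congr 1
    · refine Finset.sum_congr rfl fun j _ => ?_
      rw [Finset.sum_eq_single j]
      · simp [mul_comm]
      · intro i _ hij; simp [hij]
      · simp
    · exact Finset.sum_congr rfl fun j _ => Finset.sum_congr rfl fun i _ => by ring
  rw [Matrix.det_fin_two, entry 0 0, entry 0 1, entry 1 0, entry 1 1]
  simp only [hX0, hX1, one_mul, mul_one]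
  have e2 : (∑ j : Fin n, ∑ i, W i j) = ∑ i, m i :=
    Finset.sum_congr rfl fun j _ => hcol j
  have e4 : (∑ j : Fin n, ∑ i, W i j * x j) = ∑ i, m i * x i := by
    refine Finset.sum_congr rfl fun j _ => ?_
    rw [← Finset.sum_mul, hcol]
  have e6 : (∑ j : Fin n, ∑ i, x i * W i j) = ∑ i, m i * x i := by
    rw [Finset.sum_comm]
    refine Finset.sum_congr rfl fun i _ => ?_
    rw [← Finset.mul_sum, ← hm, mul_comm]
  have e7 : (∑ j, x j * m j * x j) = ∑ i, m i := by
    refine Finset.sum_congr rfl fun j _ => ?_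
    linear_combination m j * hx2 j
  have e8 : (∑ j : Fin n, ∑ i, x i * W i j * x j)
      = ∑ i, ∑ j, W i j * x i * x j := by
    rw [Finset.sum_comm]
    exact Finset.sum_congr rfl fun i _ => Finset.sum_congr rfl fun j _ => by ring
  have e5 : (∑ j, x j * m j) = ∑ i, m i * x i :=
    Finset.sum_congr rfl fun j _ => mul_comm _ _
  rw [e2, e4, e6, e7, e8, e5]
  ring
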